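/- arXiv:1312.3203 — 4 statements merged into one kernel-verified Lean document; each statement's English description precedes it below -/
import Mathlib

section
/- Suppose â: 𝕋 → ℝ is continuous, symmetric (â(ξ) = â(1−ξ)), and strictly decreasing on [0, 1/2]. Then for ξ ∈ 𝕋, the m×m Vandermonde matrix 𝒜_m(ξ), whose (j,l) entry is â((ξ+l)/m)^j for j,l = 0,…,m−1, is singular if and only if ξ ∈ {0, 1/2}. -/
/-!
The Vandermonde determinant vanishes iff two nodes coincide. By symmetry `â s` depends only on
`|s - 1/2|`, on which it is injective for `s ∈ [0, 1]`; hence `â s = â t` iff `s = t` or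
`s + t = 1`. Two distinct nodes `(ξ + l)/m`, `(ξ + l')/m` therefore coincide iff
`2ξ = m - l - l'`, an integer in `[0, 2)`, i.e. iff `ξ ∈ {0, 1/2}`; conversely the pairs
`(1, m - 1)` and `(0, m - 1)` realise these two cases.
-/

open Matrix

lemma apply_eq_apply_half_sub_abs_sub_half {a : ℝ → ℝ} (hsymm : ∀ x, a (1 - x) = a x)
    (s : ℝ) : a s = a (1 / 2 - |s - 1 / 2|) := by
  rcases abs_cases (s - 1 / 2) with ⟨h, -⟩ | ⟨h, -⟩
  · rw [h, ← hsymm s]; congr 1; ring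
  · rw [h]; congr 1; ring

lemma apply_eq_apply_iff_of_strictAntiOn {a : ℝ → ℝ} (hsymm : ∀ x, a (1 - x) = a x)
    (hdec : StrictAntiOn a (Set.Icc 0 (1 / 2)))
    {s t : ℝ} (hs : s ∈ Set.Icc (0 : ℝ) 1) (ht : t ∈ Set.Icc (0 : ℝ) 1) :
    a s = a t ↔ s = t ∨ s + t = 1 := by
  have mem : ∀ x ∈ Set.Icc (0 : ℝ) 1, 1 / 2 - |x - 1 / 2| ∈ Set.Icc (0 : ℝ) (1 / 2) := by
    rintro x ⟨hx0, hx1⟩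
    have : |x - 1 / 2| ≤ 1 / 2 := abs_le.2 ⟨by linarith, by linarith⟩
    exact ⟨by linarith, by linarith [abs_nonneg (x - 1 / 2)]⟩
  rw [apply_eq_apply_half_sub_abs_sub_half hsymm s, apply_eq_apply_half_sub_abs_sub_half hsymm t,
    hdec.injOn.eq_iff (mem s hs) (mem t ht), sub_right_inj, abs_eq_abs]
  apply or_congr <;> constructor <;> intro h <;> linarith

lemma add_div_mem_Icc {m : ℕ} {ξ : ℝ} (hξ : ξ ∈ Set.Icc (0 : ℝ) 1) (l : Fin m) :
    (ξ + (l : ℕ)) / m ∈ Set.Icc (0 : ℝ) 1 := by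
  have hl : ((l : ℕ) : ℝ) + 1 ≤ m := by exact_mod_cast l.isLt
  have hm : (0 : ℝ) < m := by exact_mod_cast l.pos
  exact ⟨div_nonneg (by linarith [hξ.1]) hm.le, (div_le_one hm).2 (by linarith [hξ.2])⟩

lemma apply_add_div_eq_apply_add_div_iff {a : ℝ → ℝ} (hsymm : ∀ x, a (1 - x) = a x)
    (hdec : StrictAntiOn a (Set.Icc 0 (1 / 2))) {m : ℕ} {ξ : ℝ} (hξ : ξ ∈ Set.Icc (0 : ℝ) 1)
    (l l' : Fin m) :
    a ((ξ + (l : ℕ)) / m) = a ((ξ + (l' : ℕ)) / m) ↔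
      l = l' ∨ 2 * ξ + (l : ℕ) + (l' : ℕ) = m := by
  have hm : (m : ℝ) ≠ 0 := by exact_mod_cast l.pos.ne'
  rw [apply_eq_apply_iff_of_strictAntiOn hsymm hdec (add_div_mem_Icc hξ l) (add_div_mem_Icc hξ l'),
    div_left_inj' hm, add_right_inj, Nat.cast_inj, Fin.val_inj, ← add_div,
    div_eq_one_iff_eq hm]
  refine or_congr Iff.rfl ⟨fun h => ?_, fun h => ?_⟩ <;> linarith

lemma exists_ne_two_mul_add_add_eq_iff {m : ℕ} (hm : 3 ≤ m) {ξ : ℝ}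
    (hξ : ξ ∈ Set.Ico (0 : ℝ) 1) :
    (∃ l l' : Fin m, 2 * ξ + (l : ℕ) + (l' : ℕ) = m ∧ l ≠ l') ↔ ξ = 0 ∨ ξ = 1 / 2 := by
  have hm1 : ((m - 1 : ℕ) : ℝ) = m - 1 := by rw [Nat.cast_sub (by omega), Nat.cast_one]
  constructor
  · rintro ⟨l, l', h, -⟩
    obtain ⟨k, hk⟩ : ∃ k : ℤ, (k : ℝ) = 2 * ξ := ⟨m - l - l', by push_cast; linarith⟩
    have hk0 : 0 ≤ k := by exact_mod_cast (by linarith [hξ.1] : (0 : ℝ) ≤ k)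
    have hk2 : k < 2 := by exact_mod_cast (by linarith [hξ.2] : (k : ℝ) < 2)
    obtain rfl | rfl : k = 0 ∨ k = 1 := by omega
    · left; push_cast at hk; linarith
    · right; push_cast at hk; linarith
  · rintro (rfl | rfl)
    · refine ⟨⟨1, by omega⟩, ⟨m - 1, by omega⟩, ?_, by rw [Ne, Fin.mk.injEq]; omega⟩
      simp only [hm1]; push_cast; ring
    · refine ⟨⟨0, by omega⟩, ⟨m - 1, by omega⟩, ?_, by rw [Ne, Fin.mk.injEq]; omega⟩
      simp only [hm1]; push_cast; ring

theorem vandermonde_nodes_singular_iff_general (m : ℕ) (hm : 3 ≤ m) (a : ℝ → ℝ)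
    (hsymm : ∀ ξ : ℝ, a (1 - ξ) = a ξ)
    (hdec : StrictAntiOn a (Set.Icc 0 (1 / 2)))
    (ξ : ℝ) (hξ : ξ ∈ Set.Ico (0 : ℝ) 1) :
    (Matrix.of fun j l : Fin m => (a ((ξ + (l : ℕ)) / m)) ^ (j : ℕ)).det = 0 ↔
      ξ = 0 ∨ ξ = 1 / 2 := by
  have hA : (Matrix.of fun j l : Fin m => (a ((ξ + (l : ℕ)) / m)) ^ (j : ℕ)) =
      (vandermonde fun l : Fin m => a ((ξ + (l : ℕ)) / m))ᵀ := rfl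
  rw [hA, det_transpose, det_vandermonde_eq_zero_iff, ← exists_ne_two_mul_add_add_eq_iff hm hξ]
  refine exists₂_congr fun l l' => ?_
  rw [apply_add_div_eq_apply_add_div_iff hsymm hdec (Set.Ico_subset_Icc_self hξ)]
  tauto

/-- If `â : 𝕋 → ℝ` (realized as a `1`-periodic function on `ℝ`) is continuous,
symmetric (`â(1-ξ) = â(ξ)`) and strictly decreasing on `[0,1/2]`, then for `ξ ∈ [0,1)` the
`m × m` Vandermonde matrix `𝒜_m(ξ)` with `(j,l)` entry `â((ξ+l)/m)^j` is singular iff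
`ξ ∈ {0, 1/2}`.  (We require `m ≥ 3`, as needed for both singular points to occur.) -/
theorem vandermonde_nodes_singular_iff (m : ℕ) (hm : 3 ≤ m) (a : ℝ → ℝ)
    (hcont : Continuous a) (hper : Function.Periodic a 1)
    (hsymm : ∀ ξ : ℝ, a (1 - ξ) = a ξ)
    (hdec : StrictAntiOn a (Set.Icc 0 (1 / 2)))
    (ξ : ℝ) (hξ : ξ ∈ Set.Ico (0 : ℝ) 1) :
    (Matrix.of fun j l : Fin m => (a ((ξ + (l : ℕ)) / m)) ^ (j : ℕ)).det = 0 ↔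
      ξ = 0 ∨ ξ = 1 / 2 :=
  vandermonde_nodes_singular_iff_general m hm a hsymm hdec ξ hξ
end

section
/- Let m be an odd positive integer. The matrix B of size (m−1)/2 × (m−1)/2 with entries B(c,j) = sin(2πcj/m), for c, j = 1,…,(m−1)/2, is invertible. -/
/-!
Writing `sin x sin y = (cos (x - y) - cos (x + y)) / 2` reduces the rows of `B` to the sums
`∑_{j=1}^{n} cos (2πkj/(2n+1))`, which equal `n` for `k = 0` and `-1/2` whenever `2n+1 ∤ k`
(Lagrange's trigonometric identity). Hence the rows are orthogonal: `B Bᵀ = ((2n+1)/4) • 1`.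
-/

open Finset Real Matrix

theorem sum_range_cos_two_pi_mul_div_odd (n : ℕ) {k : ℤ} (hk : ¬ (2 * n + 1 : ℤ) ∣ k) :
    ∑ j ∈ range n, cos (2 * π * k * (j + 1) / (2 * n + 1)) = -1 / 2 := by
  set a : ℝ := 2 * π * k / (2 * n + 1) with ha
  have hsin : sin (a / 2) ≠ 0 := by
    rw [Ne, sin_eq_zero_iff]
    rintro ⟨t, ht⟩
    refine hk ⟨t, ?_⟩
    rw [ha] at ht
    field_simp at ht
    exact_mod_cast (by linarith [pi_pos] : (k : ℝ) = (2 * n + 1) * t)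
  have hrhs : 2 * (sin (n * a / 2) * cos ((n - 1) * a / 2 + a)) = -sin (a / 2) := by
    rw [← mul_assoc, two_mul_sin_mul_cos,
      show n * a / 2 + ((n - 1) * a / 2 + a) = k * π by rw [ha]; field_simp; ring,
      sin_int_mul_pi, ← sin_neg]
    ring_nf
  have hsum : ∑ j ∈ range n, cos (2 * π * k * (j + 1) / (2 * n + 1)) =
      ∑ j ∈ range n, cos (a * j + a) :=
    sum_congr rfl fun j _ => by rw [ha]; ring_nf
  rw [hsum]
  apply mul_left_cancel₀ hsin
  linarith [sin_mul_sum_cos n a a]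

theorem sum_range_sin_mul_sin_two_pi_div_odd {n c c' : ℕ} (hc : c < n) (hc' : c' < n) :
    ∑ j ∈ range n, sin (2 * π * (c + 1) * (j + 1) / (2 * n + 1)) *
      sin (2 * π * (c' + 1) * (j + 1) / (2 * n + 1)) =
      if c = c' then (2 * n + 1 : ℝ) / 4 else 0 := by
  have not_dvd : ∀ k : ℤ, k ≠ 0 → |k| < 2 * n + 1 → ¬ (2 * n + 1 : ℤ) ∣ k :=
    fun k hk hlt hdvd => hk (Int.eq_zero_of_abs_lt_dvd hdvd hlt)
  have hprod : ∀ j : ℕ, sin (2 * π * (c + 1) * (j + 1) / (2 * n + 1)) *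
      sin (2 * π * (c' + 1) * (j + 1) / (2 * n + 1)) =
      (cos (2 * π * ((c - c' : ℤ) : ℝ) * (j + 1) / (2 * n + 1)) -
        cos (2 * π * ((c + c' + 2 : ℤ) : ℝ) * (j + 1) / (2 * n + 1))) / 2 := by
    intro j
    rw [eq_div_iff two_ne_zero, mul_comm, ← mul_assoc, two_mul_sin_mul_sin]
    push_cast
    ring_nf
  rw [sum_congr rfl fun j _ => hprod j, ← sum_div, sum_sub_distrib,
    sum_range_cos_two_pi_mul_div_odd n (not_dvd (c + c' + 2) (by omega) (by rw [abs_lt]; omega))]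
  split_ifs with h
  · subst h
    simp only [sub_self, Int.cast_zero, mul_zero, zero_mul, zero_div, cos_zero, sum_const,
      card_range, nsmul_eq_mul, mul_one]
    ring
  · rw [sum_range_cos_two_pi_mul_div_odd n (not_dvd (c - c') (by omega) (by rw [abs_lt]; omega))]
    ring

noncomputable def sineMatrix (n : ℕ) : Matrix (Fin n) (Fin n) ℝ :=
  of fun c j => sin (2 * π * ((c : ℕ) + 1) * ((j : ℕ) + 1) / (2 * n + 1))

theorem sineMatrix_mul_transpose (n : ℕ) :
    sineMatrix n * (sineMatrix n)ᵀ = ((2 * n + 1 : ℝ) / 4) • 1 := by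
  ext c c'
  simp only [sineMatrix, mul_apply, transpose_apply, of_apply]
  rw [Fin.sum_univ_eq_sum_range (fun j => sin (2 * π * ((c : ℕ) + 1) * (j + 1) / (2 * n + 1)) *
      sin (2 * π * ((c' : ℕ) + 1) * (j + 1) / (2 * n + 1))),
    sum_range_sin_mul_sin_two_pi_div_odd c.isLt c'.isLt]
  simp [one_apply, Fin.val_inj]

theorem isUnit_sineMatrix (n : ℕ) : IsUnit (sineMatrix n) := by
  refine .of_mul_eq_one (((2 * n + 1 : ℝ) / 4)⁻¹ • (sineMatrix n)ᵀ) ?_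
  rw [mul_smul_comm, sineMatrix_mul_transpose, smul_smul, inv_mul_cancel₀ (by positivity),
    one_smul]

/-- for odd `m`, the `(m-1)/2 × (m-1)/2` matrix with entries
`B(c,j) = sin(2πcj/m)`, `c, j = 1, …, (m-1)/2`, is invertible. -/
theorem sine_matrix_invertible (m : ℕ) (hodd : Odd m) :
    IsUnit (Matrix.of fun c j : Fin ((m - 1) / 2) =>
      Real.sin (2 * Real.pi * ((c : ℕ) + 1) * ((j : ℕ) + 1) / m)) := by
  have hm : (m : ℝ) = 2 * ((m - 1) / 2 : ℕ) + 1 := by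
    obtain ⟨t, rfl⟩ := hodd
    norm_cast
    omega
  rw [hm]
  exact isUnit_sineMatrix _
end

section
/- Let m be an odd positive integer. The matrix D of size (m−1)/2 × (m−1)/2 with entries D(c,j) = sin(2πc(2j+1)/m), for c = 1,…,(m−1)/2 and j = 0,…,(m−3)/2, is invertible. -/
open Complex Finset Real

lemma sin_mul_sin'' (a b : ℝ) :
    Real.sin a * Real.sin b = (Real.cos (a - b) - Real.cos (a + b)) / 2 := by
  rw [Real.cos_sub, Real.cos_add]; ring

lemma sum_cos_odd (m : ℕ) (hm : Odd m) (d : ℤ) (hd : ¬ ((m:ℤ) ∣ d)) :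
    ∑ j ∈ Finset.range ((m-1)/2), Real.cos (2*Real.pi*(d:ℝ)*(2*(j:ℝ)+1)/(m:ℝ)) = -1/2 := by
  obtain ⟨n, hn⟩ := hm
  have hmn : (m-1)/2 = n := by omega
  have hm0 : (m:ℝ) ≠ 0 := by
    have : 0 < m := by omega
    exact_mod_cast this.ne'
  have hm0c : (m:ℂ) ≠ 0 := by exact_mod_cast hm0
  set θ : ℝ := 2*Real.pi*(d:ℝ)/(m:ℝ) with hθ
  set z : ℂ := Complex.exp (θ * Complex.I) with hz
  have hz0 : z ≠ 0 := Complex.exp_ne_zero _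
  have hzm : z ^ m = 1 := by
    rw [hz, ← Complex.exp_nat_mul]
    have : (m:ℂ) * ((θ:ℝ) * Complex.I) = (d:ℤ) * (2 * (Real.pi:ℂ) * Complex.I) := by
      rw [hθ]; push_cast; field_simp [hm0c]
    rw [this, Complex.exp_int_mul_two_pi_mul_I]
  have hz1 : z ≠ 1 := by
    intro h
    rw [hz, Complex.exp_eq_one_iff] at h
    obtain ⟨k, hk⟩ := h
    have hI : ((θ:ℝ):ℂ) = (k:ℂ) * (2 * (Real.pi:ℂ)) := by
      apply mul_right_cancel₀ Complex.I_ne_zero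
      rw [hk]; ring
    have hre : θ = (k:ℝ) * (2 * Real.pi) := by exact_mod_cast hI
    apply hd
    refine ⟨k, ?_⟩
    rw [hθ, div_eq_iff hm0] at hre
    have h3 : (2*Real.pi) * (d:ℝ) = (2*Real.pi) * ((m:ℝ)*(k:ℝ)) := by
      linear_combination hre
    have h4 := mul_left_cancel₀ (by positivity : (2*Real.pi) ≠ 0) h3
    exact_mod_cast h4
  have hz2 : z^2 ≠ 1 := by
    intro h
    apply hz1
    have h1 : z^(2*n+1) = 1 := by rw [← hn]; exact hzm
    calc z = (z^2)^n * z := by rw [h, one_pow, one_mul]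
    _ = z^(2*n+1) := by ring
    _ = 1 := h1
  have hzp1 : z + 1 ≠ 0 := by
    intro h
    have hzneg : z = -1 := by linear_combination h
    rw [hzneg, Odd.neg_one_pow ⟨n, hn⟩] at hzm
    norm_num at hzm
  have h1z : (1:ℂ) + z ≠ 0 := by rwa [add_comm]
  have hcos : ∀ j : ℕ, Real.cos (2*Real.pi*(d:ℝ)*(2*(j:ℝ)+1)/(m:ℝ)) = (z^(2*j+1)).re := by
    intro j
    rw [hz, ← Complex.exp_nat_mul]
    have harg : ((2*j+1 : ℕ):ℂ) * ((θ:ℝ) * Complex.I) = (((2*(j:ℝ)+1)*θ : ℝ):ℂ) * Complex.I := by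
      push_cast; ring
    rw [harg, Complex.exp_ofReal_mul_I_re, hθ]
    congr 1
    field_simp
  have hS : ∑ j ∈ Finset.range n, z^(2*j+1) = -1/(z+1) := by
    have h1 : ∀ j : ℕ, z^(2*j+1) = (z^2)^j * z := fun j => by
      rw [pow_succ, pow_mul]
    rw [Finset.sum_congr rfl fun j _ => h1 j, ← Finset.sum_mul, geom_sum_eq hz2]
    have hz21 : z^2 - 1 ≠ 0 := sub_ne_zero.mpr hz2
    have hz2n : (z^2)^n * z = 1 := by
      rw [← pow_mul, ← pow_succ, ← hn, hzm]
    field_simp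
    linear_combination (z+1) * hz2n
  have hconj : (starRingEnd ℂ) z = z⁻¹ := by
    calc (starRingEnd ℂ) z = Complex.exp (-((θ:ℝ) * Complex.I)) := by
          rw [hz, ← Complex.exp_conj]; congr 1
          simp [Complex.conj_ofReal]
    _ = z⁻¹ := by rw [Complex.exp_neg, hz]
  have hzi1 : z⁻¹ + 1 ≠ 0 := by
    intro h
    apply hzp1
    have h5 : z * (z⁻¹ + 1) = z * 0 := by rw [h]
    rw [mul_add, mul_inv_cancel₀ hz0, mul_zero] at h5
    linear_combination h5
  have hadd : (-1/(z+1)) + (starRingEnd ℂ) (-1/(z+1)) = -1 := by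
    rw [map_div₀, map_add, map_one, map_neg, map_one, hconj]
    field_simp [h1z]
    ring
  have hre2 : 2 * ((-1/(z+1)).re) = -1 := by
    have h2 := Complex.add_conj (-1/(z+1))
    rw [hadd] at h2
    exact_mod_cast h2.symm
  rw [hmn]
  have hsum : (∑ j ∈ Finset.range n, Real.cos (2*Real.pi*(d:ℝ)*(2*(j:ℝ)+1)/(m:ℝ)))
      = (∑ j ∈ Finset.range n, z^(2*j+1)).re := by
    rw [Complex.re_sum]
    exact Finset.sum_congr rfl fun j _ => hcos j
  rw [hsum, hS]
  linarith

/-- for odd `m`, the `(m-1)/2 × (m-1)/2` matrix with entries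
`D(c,j) = sin(2πc(2j+1)/m)`, `c = 1, …, (m-1)/2`, `j = 0, …, (m-3)/2`, is invertible. -/
theorem odd_sine_matrix_invertible (m : ℕ) (hodd : Odd m) :
    IsUnit (Matrix.of fun c j : Fin ((m - 1) / 2) =>
      Real.sin (2 * Real.pi * ((c : ℕ) + 1) * (2 * (j : ℕ) + 1) / m)) := by
  obtain ⟨n, hn⟩ := id hodd
  have hmn : (m-1)/2 = n := by omega
  have hm0 : (m:ℝ) ≠ 0 := by
    have : 0 < m := by omega
    exact_mod_cast this.ne'
  set D : Matrix (Fin ((m-1)/2)) (Fin ((m-1)/2)) ℝ := Matrix.of fun c j =>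
      Real.sin (2 * Real.pi * ((c : ℕ) + 1) * (2 * (j : ℕ) + 1) / m) with hD
  have key : ∀ c c' : Fin ((m-1)/2), ∑ j : Fin ((m-1)/2), D c j * D c' j
      = if c = c' then (m:ℝ)/4 else 0 := by
    intro c c'
    have hc : (c:ℕ) < n := by rw [← hmn]; exact c.isLt
    have hc' : (c':ℕ) < n := by rw [← hmn]; exact c'.isLt
    set d1 : ℤ := ((c:ℕ):ℤ) - ((c':ℕ):ℤ) with hd1
    set d2 : ℤ := ((c:ℕ):ℤ) + ((c':ℕ):ℤ) + 2 with hd2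
    have hterm : ∀ j : Fin ((m-1)/2), D c j * D c' j =
        (Real.cos (2*Real.pi*(d1:ℝ)*(2*((j:ℕ):ℝ)+1)/(m:ℝ))
          - Real.cos (2*Real.pi*(d2:ℝ)*(2*((j:ℕ):ℝ)+1)/(m:ℝ))) / 2 := by
      intro j
      rw [hD]
      simp only [Matrix.of_apply]
      have e1 : 2 * Real.pi * (((c:ℕ):ℝ) + 1) * (2 * ((j:ℕ):ℝ) + 1) / (m:ℝ)
          - 2 * Real.pi * (((c':ℕ):ℝ) + 1) * (2 * ((j:ℕ):ℝ) + 1) / (m:ℝ)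
          = 2*Real.pi*(d1:ℝ)*(2*((j:ℕ):ℝ)+1)/(m:ℝ) := by
        rw [hd1]; push_cast; ring
      have e2 : 2 * Real.pi * (((c:ℕ):ℝ) + 1) * (2 * ((j:ℕ):ℝ) + 1) / (m:ℝ)
          + 2 * Real.pi * (((c':ℕ):ℝ) + 1) * (2 * ((j:ℕ):ℝ) + 1) / (m:ℝ)
          = 2*Real.pi*(d2:ℝ)*(2*((j:ℕ):ℝ)+1)/(m:ℝ) := by
        rw [hd2]; push_cast; ring
      rw [sin_mul_sin'', e1, e2]
    rw [Finset.sum_congr rfl fun j _ => hterm j]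
    rw [Fin.sum_univ_eq_sum_range (fun k : ℕ =>
        (Real.cos (2*Real.pi*(d1:ℝ)*(2*(k:ℝ)+1)/(m:ℝ))
          - Real.cos (2*Real.pi*(d2:ℝ)*(2*(k:ℝ)+1)/(m:ℝ))) / 2) ((m-1)/2)]
    rw [← Finset.sum_div, Finset.sum_sub_distrib]
    have hcz : ((c:ℕ):ℤ) < (n:ℤ) := by exact_mod_cast hc
    have hcz' : ((c':ℕ):ℤ) < (n:ℤ) := by exact_mod_cast hc'
    have hc0 : (0:ℤ) ≤ ((c:ℕ):ℤ) := Int.natCast_nonneg _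
    have hc0' : (0:ℤ) ≤ ((c':ℕ):ℤ) := Int.natCast_nonneg _
    have hmz : (m:ℤ) = 2*(n:ℤ)+1 := by exact_mod_cast hn
    have hd2nd : ¬ ((m:ℤ) ∣ d2) := by
      intro h
      have h2 : (m:ℤ) ≤ d2 := Int.le_of_dvd (by rw [hd2]; positivity) h
      rw [hd2] at h2
      omega
    have hS2 := sum_cos_odd m hodd d2 hd2nd
    by_cases hcc : c = c'
    · rw [if_pos hcc]
      have hd10 : d1 = 0 := by rw [hd1, hcc]; ring
      have hS1 : ∑ j ∈ Finset.range ((m-1)/2),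
          Real.cos (2*Real.pi*(d1:ℝ)*(2*(j:ℝ)+1)/(m:ℝ)) = (n:ℝ) := by
        rw [hmn]
        have h1 : ∀ j ∈ Finset.range n,
            Real.cos (2*Real.pi*(d1:ℝ)*(2*(j:ℝ)+1)/(m:ℝ)) = 1 := by
          intro j _; rw [hd10]; norm_num
        rw [Finset.sum_congr rfl h1, Finset.sum_const, Finset.card_range]
        simp
      rw [hS1, hS2]
      have hmr : (m:ℝ) = 2*(n:ℝ)+1 := by exact_mod_cast hn
      rw [hmr]; ring
    · rw [if_neg hcc]
      have hne : ((c:ℕ):ℤ) ≠ ((c':ℕ):ℤ) := by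
        intro h
        apply hcc
        apply Fin.ext
        exact_mod_cast h
      have hd1nd : ¬ ((m:ℤ) ∣ d1) := by
        intro h
        have hpos : 0 < |d1| := abs_pos.mpr (by rw [hd1]; exact sub_ne_zero.mpr hne)
        have h2 : (m:ℤ) ≤ |d1| := Int.le_of_dvd hpos ((dvd_abs _ _).mpr h)
        have hb : |d1| < (m:ℤ) := by
          rw [hd1, abs_sub_lt_iff]
          omega
        omega
      have hS1 := sum_cos_odd m hodd d1 hd1nd
      rw [hS1, hS2]
      norm_num
  have hDDT : D * D.transpose = ((m:ℝ)/4) • 1 := by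
    ext c c'
    rw [Matrix.mul_apply]
    simp only [Matrix.transpose_apply]
    rw [key c c']
    simp only [Matrix.smul_apply, Matrix.one_apply, smul_eq_mul]
    split_ifs <;> simp
  rw [Matrix.isUnit_iff_isUnit_det, isUnit_iff_ne_zero]
  intro hdet
  have h := congrArg Matrix.det hDDT
  rw [Matrix.det_mul, Matrix.det_transpose, hdet, zero_mul, Matrix.det_smul,
    Matrix.det_one, mul_one] at h
  have hne : ((m:ℝ)/4) ^ Fintype.card (Fin ((m-1)/2)) ≠ 0 :=
    pow_ne_zero _ (div_ne_zero hm0 (by norm_num))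
  exact hne h.symm
end

section
/- Suppose â ∈ C¹ on (0,1/2) is real, symmetric (â(ξ)=â(1−ξ)), strictly decreasing on [0,1/2], with |â| ≤ 1, and â′ nonzero on (0,1/2). Let γ = min over M = [1/(4mn), 1/2 − 1/(4mn)] of |â′|, and let ξ ∈ J = [1/(4n), 1/2 − 1/(4n)] ∪ [1/2 + 1/(4n), 1 − 1/(4n)]. Then for all 0 ≤ i < j ≤ m−1, |â((ξ+j)/m) − â((ξ+i)/m)| ≥ γ/(2mn). -/
/-! The nodes `(ξ + k) / m` lie in `M` or in its mirror image `1 - M`, because `2ξ` stays at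
distance at least `1 / (2n)` from the integers. For points of `M ∪ (1 - M)`, the mean value
theorem on `M` and the symmetry `â (1 - x) = â x` give
`|â y - â x| ≥ γ · min |y - x| |1 - y - x|`, and for distinct nodes both distances are at least
`1 / (2mn)`: the first is a nonzero multiple of `1 / m`, the second is `|2ξ - (m - i - j)| / m`. -/

open Set

theorem mul_abs_sub_le_abs_sub_of_le_abs_deriv {f : ℝ → ℝ} {s : Set ℝ} {γ : ℝ}
    (hs : s.OrdConnected) (hf : ∀ z ∈ s, DifferentiableAt ℝ f z)
    (hγ : ∀ z ∈ s, γ ≤ |deriv f z|) {x y : ℝ} (hx : x ∈ s) (hy : y ∈ s) :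
    γ * |y - x| ≤ |f y - f x| := by
  wlog hxy : x ≤ y generalizing x y
  · simpa only [abs_sub_comm] using this hy hx (le_of_not_ge hxy)
  rcases hxy.eq_or_lt with rfl | hlt
  · simp
  have hIcc : Icc x y ⊆ s := hs.out hx hy
  obtain ⟨c, hc, hslope⟩ := exists_deriv_eq_slope f hlt
    (fun z hz => (hf z (hIcc hz)).continuousAt.continuousWithinAt)
    (fun z hz => (hf z (hIcc (Ioo_subset_Icc_self hz))).differentiableWithinAt)
  have hfxy : f y - f x = deriv f c * (y - x) := by
    rw [hslope, div_mul_cancel₀ _ (sub_ne_zero.2 hlt.ne')]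
  rw [hfxy, abs_mul]
  exact mul_le_mul_of_nonneg_right (hγ c (hIcc (Ioo_subset_Icc_self hc))) (abs_nonneg _)

theorem mul_min_le_abs_sub_of_symm {f : ℝ → ℝ} {s : Set ℝ} {γ : ℝ}
    (hsymm : ∀ x, f (1 - x) = f x) (hs : s.OrdConnected)
    (hf : ∀ z ∈ s, DifferentiableAt ℝ f z) (hγ : ∀ z ∈ s, γ ≤ |deriv f z|) (hγ0 : 0 ≤ γ)
    {x y : ℝ} (hx : x ∈ s ∨ 1 - x ∈ s) (hy : y ∈ s ∨ 1 - y ∈ s) :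
    γ * min |y - x| |1 - y - x| ≤ |f y - f x| := by
  have mvt := @mul_abs_sub_le_abs_sub_of_le_abs_deriv f s γ hs hf hγ
  have hleft := mul_le_mul_of_nonneg_left (min_le_left |y - x| |1 - y - x|) hγ0
  have hright := mul_le_mul_of_nonneg_left (min_le_right |y - x| |1 - y - x|) hγ0
  rcases hx with hx | hx <;> rcases hy with hy | hy
  · exact hleft.trans (mvt hx hy)
  · have h := mvt hx hy
    rw [hsymm] at h
    exact hright.trans h
  · have h := mvt hx hy
    rw [hsymm, show y - (1 - x) = -(1 - y - x) by ring, abs_neg] at h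
    exact hright.trans h
  · have h := mvt hx hy
    rw [hsymm, hsymm, show 1 - y - (1 - x) = x - y by ring, abs_sub_comm x] at h
    exact hleft.trans h

section Nodes

variable {δ ξ : ℝ} {m : ℕ}

theorem le_abs_two_mul_sub_intCast
    (hξ : ξ ∈ Icc δ (1 / 2 - δ) ∪ Icc (1 / 2 + δ) (1 - δ)) (q : ℤ) :
    2 * δ ≤ |2 * ξ - q| := by
  rcases hξ with ⟨h₁, h₂⟩ | ⟨h₁, h₂⟩
  · rcases le_or_gt q 0 with hq | hq
    · have : (q : ℝ) ≤ 0 := by exact_mod_cast hq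
      exact le_abs.2 (Or.inl (by linarith))
    · have : (1 : ℝ) ≤ q := by exact_mod_cast hq
      exact le_abs.2 (Or.inr (by linarith))
  · rcases le_or_gt q 1 with hq | hq
    · have : (q : ℝ) ≤ 1 := by exact_mod_cast hq
      exact le_abs.2 (Or.inl (by linarith))
    · have : (2 : ℝ) ≤ q := by exact_mod_cast hq
      exact le_abs.2 (Or.inr (by linarith))

theorem le_and_le_one_sub_of_mem
    (hξ : ξ ∈ Icc δ (1 / 2 - δ) ∪ Icc (1 / 2 + δ) (1 - δ)) : δ ≤ ξ ∧ ξ ≤ 1 - δ := by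
  rcases hξ with ⟨h₁, h₂⟩ | ⟨h₁, h₂⟩ <;> constructor <;> linarith

theorem node_mem_or_one_sub_mem (hξ : ξ ∈ Icc δ (1 / 2 - δ) ∪ Icc (1 / 2 + δ) (1 - δ))
    {k : ℕ} (hk : k < m) :
    (ξ + k) / m ∈ Icc (δ / m) (1 / 2 - δ / m) ∨
      1 - (ξ + k) / m ∈ Icc (δ / m) (1 / 2 - δ / m) := by
  obtain ⟨hδξ, hξδ⟩ := le_and_le_one_sub_of_mem hξ
  have hm : (0 : ℝ) < m := by exact_mod_cast (Nat.zero_le k).trans_lt hk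
  have hkm : (k : ℝ) + 1 ≤ m := by exact_mod_cast hk
  have hk0 : (0 : ℝ) ≤ k := k.cast_nonneg
  have hhalf := le_abs.1 (le_abs_two_mul_sub_intCast hξ ((m : ℤ) - 2 * k))
  push_cast at hhalf
  have hreflect : 1 - (ξ + k) / m = (m - ξ - k) / m := by field_simp; ring
  have hupper : 1 / 2 - δ / m = (m / 2 - δ) / m := by field_simp
  simp only [mem_Icc, hreflect, hupper, div_le_div_iff_of_pos_right hm]
  rcases hhalf with h | h
  · right; constructor <;> linarith
  · left; constructor <;> linarith

theorem div_le_min_abs_sub_nodes (hξ : ξ ∈ Icc δ (1 / 2 - δ) ∪ Icc (1 / 2 + δ) (1 - δ))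
    (hm : 0 < m) {i j : ℕ} (hij : i < j) :
    2 * δ / m ≤ min |(ξ + j) / m - (ξ + i) / m| |1 - (ξ + j) / m - (ξ + i) / m| := by
  obtain ⟨hδξ, hξδ⟩ := le_and_le_one_sub_of_mem hξ
  have hm : (0 : ℝ) < m := Nat.cast_pos.2 hm
  have hij : (i : ℝ) + 1 ≤ j := by exact_mod_cast hij
  have hsub : (ξ + j) / m - (ξ + i) / m = ((j : ℝ) - i) / m := by ring
  have hreflect : 1 - (ξ + j) / m - (ξ + i) / m = -(2 * ξ - ((m : ℝ) - i - j)) / m := by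
    field_simp; ring
  have hint := le_abs_two_mul_sub_intCast hξ ((m : ℤ) - i - j)
  push_cast at hint
  rw [hsub, hreflect, abs_div, abs_div, abs_neg, abs_of_pos hm, le_min_iff,
    div_le_div_iff_of_pos_right hm, div_le_div_iff_of_pos_right hm, abs_of_pos (by linarith)]
  exact ⟨by linarith, hint⟩

end Nodes

theorem node_separation_general (m n : ℕ) (hm : 1 ≤ m) (hn : 1 ≤ n) (a : ℝ → ℝ)
    (hsymm : ∀ ξ : ℝ, a (1 - ξ) = a ξ)
    (hC1 : ContDiffOn ℝ 1 a (Set.Ioo 0 (1 / 2)))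
    (γ : ℝ)
    (hγ : IsLeast ((fun x => |deriv a x|) ''
      Set.Icc (1 / (4 * (m : ℝ) * n)) (1 / 2 - 1 / (4 * (m : ℝ) * n))) γ)
    (ξ : ℝ)
    (hξ : ξ ∈ Set.Icc (1 / (4 * (n : ℝ))) (1 / 2 - 1 / (4 * (n : ℝ))) ∪
      Set.Icc (1 / 2 + 1 / (4 * (n : ℝ))) (1 - 1 / (4 * (n : ℝ))))
    (i j : ℕ) (hij : i < j) (hj : j ≤ m - 1) :
    γ / (2 * (m : ℝ) * n) ≤ |a ((ξ + j) / m) - a ((ξ + i) / m)| := by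
  have hm' : (0 : ℝ) < m := by exact_mod_cast hm
  have hn' : (0 : ℝ) < n := by exact_mod_cast hn
  set δ : ℝ := 1 / (4 * (n : ℝ)) with hδ
  have hε : 1 / (4 * (m : ℝ) * n) = δ / m := by rw [hδ]; field_simp
  rw [hε] at hγ
  have hε₀ : 0 < δ / m := by positivity
  have hS : Icc (δ / m) (1 / 2 - δ / m) ⊆ Ioo 0 (1 / 2) := fun z hz =>
    ⟨hε₀.trans_le hz.1, hz.2.trans_lt (by linarith)⟩
  have hdiff : ∀ z ∈ Icc (δ / m) (1 / 2 - δ / m), DifferentiableAt ℝ a z := fun z hz =>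
    (hC1.differentiableOn one_ne_zero z (hS hz)).differentiableAt (isOpen_Ioo.mem_nhds (hS hz))
  have hγ0 : 0 ≤ γ := by
    obtain ⟨x, -, rfl⟩ := hγ.1
    exact abs_nonneg _
  calc γ / (2 * (m : ℝ) * n) = γ * (2 * δ / m) := by rw [hδ]; field_simp; ring
    _ ≤ γ * min |(ξ + j) / m - (ξ + i) / m| |1 - (ξ + j) / m - (ξ + i) / m| :=
      mul_le_mul_of_nonneg_left (div_le_min_abs_sub_nodes hξ (by omega) hij) hγ0
    _ ≤ |a ((ξ + j) / m) - a ((ξ + i) / m)| :=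
      mul_min_le_abs_sub_of_symm hsymm ordConnected_Icc hdiff
        (fun z hz => hγ.2 (mem_image_of_mem _ hz)) hγ0
        (node_mem_or_one_sub_mem hξ (by omega)) (node_mem_or_one_sub_mem hξ (by omega))

/-- for `â` real, symmetric, strictly decreasing on `[0,1/2]`, `|â| ≤ 1`,
`C¹` with nonvanishing derivative on `(0,1/2)`, with
`γ = min_{M} |â′|`, `M = [1/(4mn), 1/2 - 1/(4mn)]`, and
`ξ ∈ J = [1/(4n), 1/2 - 1/(4n)] ∪ [1/2 + 1/(4n), 1 - 1/(4n)]`: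
for all `0 ≤ i < j ≤ m-1`, `|â((ξ+j)/m) - â((ξ+i)/m)| ≥ γ/(2mn)`. -/
theorem node_separation (m n : ℕ) (hm : 1 ≤ m) (hn : 1 ≤ n) (a : ℝ → ℝ)
    (hper : Function.Periodic a 1) (hsymm : ∀ ξ : ℝ, a (1 - ξ) = a ξ)
    (hdec : StrictAntiOn a (Set.Icc 0 (1 / 2)))
    (hbd : ∀ ξ : ℝ, |a ξ| ≤ 1)
    (hC1 : ContDiffOn ℝ 1 a (Set.Ioo 0 (1 / 2)))
    (hd : ∀ x ∈ Set.Ioo (0 : ℝ) (1 / 2), deriv a x ≠ 0)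
    (γ : ℝ)
    (hγ : IsLeast ((fun x => |deriv a x|) ''
      Set.Icc (1 / (4 * (m : ℝ) * n)) (1 / 2 - 1 / (4 * (m : ℝ) * n))) γ)
    (ξ : ℝ)
    (hξ : ξ ∈ Set.Icc (1 / (4 * (n : ℝ))) (1 / 2 - 1 / (4 * (n : ℝ))) ∪
      Set.Icc (1 / 2 + 1 / (4 * (n : ℝ))) (1 - 1 / (4 * (n : ℝ))))
    (i j : ℕ) (hij : i < j) (hj : j ≤ m - 1) :
    γ / (2 * (m : ℝ) * n) ≤ |a ((ξ + j) / m) - a ((ξ + i) / m)| :=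
  node_separation_general m n hm hn a hsymm hC1 γ hγ ξ hξ i j hij hj
end
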